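/- Let (Ω, 𝒢) be a measurable space, p* a probability measure on Ω, Y : Ω → ℝ^d a measurable map, and V : Ω × ℝ → EReal jointly measurable with V(ω, ·) nondecreasing for every ω. Let 0 < γ̲ ≤ 1 ≤ γ̄ with γ̲ ≠ γ̄ and let η ∈ (0,1) satisfy γ̲ < η·γ̄. Let C : Ω → [0,∞] be measurable with c* := ∫⁻ C dp* < ∞ and assume that for every ω with C(ω) < ∞, every λ ≥ 1 and every x ∈ ℝ: V(ω, λ·x) ≤ λ^{γ̲}·(V(ω,x) + C(ω)) and V(ω, λ·x) ≤ λ^{γ̄}·(V(ω,x) + C(ω)) in EReal. Let α* ∈ (0,1] and A ⊆ ℝ^d satisfy p*({ω : ⟨h, Y(ω)⟩ < −α*·|h|}) ≥ α* for every h ∈ A with h ≠ 0, and let n₀ ≥ 1 be an integer with p*({ω : V(ω, −n₀) ≤ −(1 + 2c*/α*)}) ≥ 1 − α*/2. Assume l* := Σ_{θ ∈ {−1,1}^d} ∫⁻ (V(ω, 1 + ⟨θ, Y(ω)⟩))⁺ dp*(ω) < ∞. Define K₀(x) := max(1, x⁺, (x⁺ + n₀)/α*, ((x⁺ + n₀)/α*)^{1/(1−η)}).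 Then for every x ∈ ℝ and every h ∈ A with |h| ≥ K₀(x): I_{p*}(ω ↦ V(ω, x + ⟨h, Y(ω)⟩)) ≤ |h|^{γ̲}·(l* + c*) − |h|^{η·γ̄}·α*/2, the comparison being in EReal. -/

import Mathlib

open MeasureTheory Set
open scoped ENNReal

/-- The `[0,∞]`-valued positive part `a⁺ = max(a,0)` of `a : EReal`. -/
noncomputable def ePos (a : EReal) : ℝ≥0∞ := (max a 0).abs

/-- The `[0,∞]`-valued negative part `a⁻ = max(−a,0)` of `a : EReal`. -/
noncomputable def eNeg (a : EReal) : ℝ≥0∞ := (max (-a) 0).abs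

/-- The `(−∞)`-integral `I_p(f) := (∫⁻ f⁺ dp) − (∫⁻ f⁻ dp)` computed in `EReal`; note that
`EReal` subtraction satisfies `⊤ - ⊤ = ⊥`, which implements the stipulation
`I_p(f) = −∞` when both integrals are infinite. -/
noncomputable def Iminus {Ω : Type*} [MeasurableSpace Ω] (p : Measure Ω)
    (f : Ω → EReal) : EReal :=
  ((∫⁻ ω, ePos (f ω) ∂p : ℝ≥0∞) : EReal) - ((∫⁻ ω, eNeg (f ω) ∂p : ℝ≥0∞) : EReal)

/-- The sign vector of `ℝ^d` associated with `s : Fin d → Bool` (coordinates `±1`). -/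
noncomputable def signVec {d : ℕ} (s : Fin d → Bool) : EuclideanSpace ℝ (Fin d) :=
  WithLp.toLp 2 (fun i => if s i then (1 : ℝ) else -1)

/-!
For the positive part, `x + ⟪h, Y⟫ ≤ |h| (1 + ⟪θ, Y⟫)` with `θ` the sign vector of `Y`, so the
lower elasticity bound at `λ = |h|` dominates `V(x + ⟪h, Y⟫)⁺` by
`|h|^γ̲ (∑_θ V(1 + ⟪θ, Y⟫)⁺ + C)`, whose integral is `|h|^γ̲ (l* + c*)`.

For the negative part, put `M = 1 + 2c*/α*`. The event `{⟪h, Y⟫ < -α*|h|} ∩ {V(-n₀) ≤ -M}` has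
probability at least `α*/2`, and on it the choice of `K₀` gives `x + ⟪h, Y⟫ ≤ |h|^η (-n₀)`, so the
upper elasticity bound at `λ = |h|^η` gives `V(x + ⟪h, Y⟫) ≤ |h|^{ηγ̄} (C - M)`. Integrating,
`∫ V⁻ ≥ |h|^{ηγ̄} (M α*/2 - c*) = |h|^{ηγ̄} α*/2`.
-/
lemma ePos_eq_toENNReal (a : EReal) : ePos a = a.toENNReal := by
  induction a with
  | bot => simp [ePos]
  | coe a =>
    rcases le_total a 0 with ha | ha
    · simp [ePos, ha, ENNReal.ofReal_of_nonpos ha]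
    · simp [ePos, ha, EReal.abs_def, abs_of_nonneg ha]
  | top => simp [ePos]

lemma eNeg_eq_toENNReal_neg (a : EReal) : eNeg a = (-a).toENNReal := by
  rw [eNeg, ← ePos, ePos_eq_toENNReal]

lemma Iminus_le_coe_sub {Ω : Type*} [MeasurableSpace Ω] {p : Measure Ω} {f : Ω → EReal}
    {a b : ℝ} (ha : 0 ≤ a) (hpos : ∫⁻ ω, ePos (f ω) ∂p ≤ ENNReal.ofReal a)
    (hneg : ENNReal.ofReal b ≤ ∫⁻ ω, eNeg (f ω) ∂p) : Iminus p f ≤ ((a - b : ℝ) : EReal) := by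
  rw [Iminus, EReal.coe_sub]
  refine EReal.sub_le_sub ?_ ?_
  · simpa [EReal.coe_ennreal_ofReal, ha] using EReal.coe_ennreal_le_coe_ennreal_iff.2 hpos
  · calc (b : EReal) ≤ ((ENNReal.ofReal b : ℝ≥0∞) : EReal) := by
          simp [EReal.coe_ennreal_ofReal]
      _ ≤ _ := EReal.coe_ennreal_le_coe_ennreal_iff.2 hneg

lemma ofReal_sub_le_measure_inter {α : Type*} [MeasurableSpace α] {μ : Measure α}
    [IsProbabilityMeasure μ] {s t : Set α} (ht : MeasurableSet t) {a b : ℝ} (hb : 0 ≤ b)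
    (hs : ENNReal.ofReal a ≤ μ s) (hts : ENNReal.ofReal (1 - b) ≤ μ t) :
    ENNReal.ofReal (a - b) ≤ μ (s ∩ t) := by
  have hcompl : μ tᶜ ≤ ENNReal.ofReal b := by
    rw [prob_compl_eq_one_sub ht, tsub_le_iff_right]
    calc (1 : ℝ≥0∞) = ENNReal.ofReal (b + (1 - b)) := by simp
      _ ≤ ENNReal.ofReal b + μ t := ENNReal.ofReal_add_le.trans (add_le_add_right hts _)
  calc ENNReal.ofReal (a - b) = ENNReal.ofReal a - ENNReal.ofReal b := ENNReal.ofReal_sub _ hb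
    _ ≤ μ s - μ tᶜ := tsub_le_tsub hs hcompl
    _ ≤ μ (s \ tᶜ) := le_measure_sdiff
    _ = μ (s ∩ t) := by rw [sdiff_compl]

lemma mul_rpow_le_self {R H η : ℝ} (hR : 0 ≤ R) (hH : 1 ≤ H) (hη : η < 1)
    (hRH : R ^ (1 / (1 - η)) ≤ H) : R * H ^ η ≤ H := by
  have hH0 : 0 ≤ H := zero_le_one.trans hH
  rcases le_total R 1 with hR1 | hR1
  · calc R * H ^ η ≤ 1 * H ^ η := by gcongr
      _ ≤ H ^ (1 : ℝ) := by rw [one_mul]; exact Real.rpow_le_rpow_of_exponent_le hH hη.le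
      _ = H := Real.rpow_one H
  · have hRH' : R ≤ H ^ (1 - η) := by
      calc R = (R ^ (1 / (1 - η))) ^ (1 - η) := by
            rw [← Real.rpow_mul hR, one_div_mul_cancel (by linarith), Real.rpow_one]
        _ ≤ H ^ (1 - η) := by gcongr
    calc R * H ^ η ≤ H ^ (1 - η) * H ^ η := by gcongr
      _ = H := by rw [← Real.rpow_add' hH0 (by norm_num), sub_add_cancel, Real.rpow_one]

lemma exists_inner_le_norm_mul_inner_signVec {d : ℕ} (h y : EuclideanSpace ℝ (Fin d)) :
    ∃ s, inner ℝ h y ≤ ‖h‖ * inner ℝ (signVec s) y := by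
  refine ⟨fun i => decide (0 ≤ y i), ?_⟩
  simp only [PiLp.inner_apply, RCLike.inner_apply, conj_trivial, Finset.mul_sum]
  refine Finset.sum_le_sum fun i _ => ?_
  have hsign : y i * signVec (fun i => decide (0 ≤ y i)) i = |y i| := by
    rcases le_or_gt 0 (y i) with hy | hy
    · simp [signVec, hy, abs_of_nonneg hy]
    · simp [signVec, hy.not_ge, abs_of_neg hy]
  calc y i * h i ≤ |h i| * |y i| := by rw [mul_comm, ← abs_mul]; exact le_abs_self _
    _ ≤ ‖h‖ * |y i| := by gcongr; exact PiLp.norm_apply_le h i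
    _ = _ := by rw [hsign]

def ElasticityBound (v : ℝ → EReal) (c : ℝ≥0∞) (γ : ℝ) : Prop :=
  ∀ lam : ℝ, 1 ≤ lam → ∀ x : ℝ, v (lam * x) ≤ ((lam ^ γ : ℝ) : EReal) * (v x + (c : EReal))

namespace ElasticityBound

variable {v : ℝ → EReal} {c : ℝ≥0∞} {γ : ℝ}

lemma ePos_le_sum_signVec (hv : ElasticityBound v c γ) (hmono : Monotone v) {d : ℕ} {x : ℝ}
    {h y : EuclideanSpace ℝ (Fin d)} (hH : 1 ≤ ‖h‖) (hx : x ≤ ‖h‖) :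
    ePos (v (x + inner ℝ h y))
      ≤ ENNReal.ofReal (‖h‖ ^ γ) * (∑ s, ePos (v (1 + inner ℝ (signVec s) y)) + c) := by
  obtain ⟨s₀, hs₀⟩ := exists_inner_le_norm_mul_inner_signVec h y
  have harg : x + inner ℝ h y ≤ ‖h‖ * (1 + inner ℝ (signVec s₀) y) := by
    rw [mul_add, mul_one]; exact add_le_add hx hs₀
  have hr : (0 : EReal) ≤ ((‖h‖ ^ γ : ℝ) : EReal) := EReal.coe_nonneg.2 (by positivity)
  simp only [ePos_eq_toENNReal]
  calc (v (x + inner ℝ h y)).toENNReal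
      ≤ (((‖h‖ ^ γ : ℝ) : EReal) * (v (1 + inner ℝ (signVec s₀) y) + c)).toENNReal :=
        EReal.toENNReal_le_toENNReal ((hmono harg).trans (hv _ hH _))
    _ ≤ ENNReal.ofReal (‖h‖ ^ γ) * ((v (1 + inner ℝ (signVec s₀) y)).toENNReal + c) := by
        rw [EReal.toENNReal_mul hr, EReal.real_coe_toENNReal]
        gcongr
        exact EReal.toENNReal_add_le.trans_eq (by rw [EReal.toENNReal_coe])
    _ ≤ _ := by
        gcongr
        exact Finset.single_le_sum (f := fun s => (v (1 + inner ℝ (signVec s) y)).toENNReal)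
          (fun _ _ => zero_le) (Finset.mem_univ s₀)

lemma ofReal_mul_sub_le_eNeg (hv : ElasticityBound v c γ) (hmono : Monotone v) (hc : c ≠ ⊤)
    {lam z M y : ℝ} (hlam : 1 ≤ lam) (hz : v z ≤ ((-M : ℝ) : EReal)) (hy : y ≤ lam * z) :
    ENNReal.ofReal (lam ^ γ) * (ENNReal.ofReal M - c) ≤ eNeg (v y) := by
  lift c to NNReal using hc
  have hr : 0 ≤ lam ^ γ := by positivity
  have hvy : v y ≤ ((lam ^ γ * (-M + c) : ℝ) : EReal) := by
    refine (hmono hy).trans ((hv lam hlam z).trans ?_)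
    rw [EReal.coe_mul, EReal.coe_add]
    exact mul_le_mul_of_nonneg_left (add_le_add_left hz _) (EReal.coe_nonneg.2 hr)
  calc ENNReal.ofReal (lam ^ γ) * (ENNReal.ofReal M - c)
      = eNeg ((lam ^ γ * (-M + c) : ℝ) : EReal) := by
        rw [eNeg_eq_toENNReal_neg, ← EReal.coe_neg, EReal.real_coe_toENNReal,
          show -(lam ^ γ * (-M + c)) = lam ^ γ * (M - c) by ring, ENNReal.ofReal_mul hr,
          ENNReal.ofReal_sub _ c.coe_nonneg, ENNReal.ofReal_coe_nnreal]
    _ ≤ eNeg (v y) := by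
        rw [eNeg_eq_toENNReal_neg, eNeg_eq_toENNReal_neg]
        exact EReal.toENNReal_le_toENNReal (EReal.neg_le_neg_iff.2 hvy)

end ElasticityBound

section Integrals

variable {Ω : Type*} [MeasurableSpace Ω] {d : ℕ} {p : Measure Ω}
  {Y : Ω → EuclideanSpace ℝ (Fin d)} {V : Ω → ℝ → EReal} {C : Ω → ℝ≥0∞} {γ : ℝ}

lemma lintegral_ePos_le (hY : Measurable Y) (hV : Measurable (Function.uncurry V))
    (hmono : ∀ ω, Monotone (V ω)) (hC : Measurable C) (hCfin : ∀ᵐ ω ∂p, C ω < ⊤)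
    (hgrow : ∀ ω, C ω < ⊤ → ElasticityBound (V ω) (C ω) γ) {x : ℝ}
    {h : EuclideanSpace ℝ (Fin d)} (hH : 1 ≤ ‖h‖) (hx : x ≤ ‖h‖) :
    ∫⁻ ω, ePos (V ω (x + inner ℝ h (Y ω))) ∂p ≤ ENNReal.ofReal (‖h‖ ^ γ) *
      (∑ s, ∫⁻ ω, ePos (V ω (1 + inner ℝ (signVec s) (Y ω))) ∂p + ∫⁻ ω, C ω ∂p) := by
  have hmeas (s : Fin d → Bool) :
      Measurable fun ω => ePos (V ω (1 + inner ℝ (signVec s) (Y ω))) := by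
    simp only [ePos_eq_toENNReal]
    exact (hV.comp (measurable_id.prodMk (measurable_const.add
      ((continuous_const.inner continuous_id).measurable.comp hY)))).ereal_toENNReal
  calc ∫⁻ ω, ePos (V ω (x + inner ℝ h (Y ω))) ∂p
      ≤ ∫⁻ ω, ENNReal.ofReal (‖h‖ ^ γ) *
          (∑ s, ePos (V ω (1 + inner ℝ (signVec s) (Y ω))) + C ω) ∂p :=
        lintegral_mono_ae <| hCfin.mono fun ω hω =>
          (hgrow ω hω).ePos_le_sum_signVec (hmono ω) hH hx
    _ = _ := by
        rw [lintegral_const_mul' _ _ ENNReal.ofReal_ne_top, lintegral_add_right _ hC,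
          lintegral_finsetSum _ fun s _ => hmeas s]

lemma ofReal_mul_sub_le_lintegral_eNeg (hmono : ∀ ω, Monotone (V ω)) (hC : Measurable C)
    (hCfin : ∀ᵐ ω ∂p, C ω < ⊤) (hgrow : ∀ ω, C ω < ⊤ → ElasticityBound (V ω) (C ω) γ)
    {u : Ω → ℝ} {S : Set Ω} (hS : MeasurableSet S) {lam z M : ℝ} (hlam : 1 ≤ lam)
    (hSu : ∀ ω ∈ S, u ω ≤ lam * z ∧ V ω z ≤ ((-M : ℝ) : EReal)) :
    ENNReal.ofReal (lam ^ γ) * (ENNReal.ofReal M * p S - ∫⁻ ω, C ω ∂p)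
      ≤ ∫⁻ ω, eNeg (V ω (u ω)) ∂p := by
  have hsub : ENNReal.ofReal M * p S - ∫⁻ ω, C ω ∂p ≤ ∫⁻ ω in S, (ENNReal.ofReal M - C ω) ∂p :=
    calc ENNReal.ofReal M * p S - ∫⁻ ω, C ω ∂p
        ≤ ∫⁻ _ in S, ENNReal.ofReal M ∂p - ∫⁻ ω in S, C ω ∂p := by
          rw [setLIntegral_const, mul_comm]
          exact tsub_le_tsub_left (setLIntegral_le_lintegral _ _) _
      _ ≤ _ := lintegral_sub_le _ _ hC
  calc ENNReal.ofReal (lam ^ γ) * (ENNReal.ofReal M * p S - ∫⁻ ω, C ω ∂p)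
      ≤ ENNReal.ofReal (lam ^ γ) * ∫⁻ ω in S, (ENNReal.ofReal M - C ω) ∂p := by gcongr
    _ = ∫⁻ ω in S, ENNReal.ofReal (lam ^ γ) * (ENNReal.ofReal M - C ω) ∂p :=
        (lintegral_const_mul' _ _ ENNReal.ofReal_ne_top).symm
    _ ≤ ∫⁻ ω in S, eNeg (V ω (u ω)) ∂p :=
        lintegral_mono_ae <| (ae_restrict_iff' hS).2 <| hCfin.mono fun ω hω hωS =>
          (hgrow ω hω).ofReal_mul_sub_le_eNeg (hmono ω) hω.ne hlam (hSu ω hωS).2 (hSu ω hωS).1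
    _ ≤ _ := setLIntegral_le_lintegral _ _

lemma ofReal_le_lintegral_eNeg [IsProbabilityMeasure p] (hY : Measurable Y)
    (hV : Measurable (Function.uncurry V)) (hmono : ∀ ω, Monotone (V ω)) (hC : Measurable C)
    (hCfin : ∀ᵐ ω ∂p, C ω < ⊤) (hgrow : ∀ ω, C ω < ⊤ → ElasticityBound (V ω) (C ω) γ)
    {η α c : ℝ} (hη0 : 0 ≤ η) (hη1 : η < 1) (hα : 0 < α) (hc0 : 0 ≤ c)
    (hc : ∫⁻ ω, C ω ∂p = ENNReal.ofReal c) {n : ℕ} {x : ℝ} {h : EuclideanSpace ℝ (Fin d)}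
    (hH : 1 ≤ ‖h‖) (hK : ((max x 0 + n) / α) ^ (1 / (1 - η)) ≤ ‖h‖)
    (hqNA : ENNReal.ofReal α ≤ p {ω | inner ℝ h (Y ω) < -α * ‖h‖})
    (hneg : ENNReal.ofReal (1 - α / 2)
      ≤ p {ω | V ω (-(n : ℝ)) ≤ ((-(1 + 2 * c / α) : ℝ) : EReal)}) :
    ENNReal.ofReal (‖h‖ ^ (η * γ) * α / 2) ≤ ∫⁻ ω, eNeg (V ω (x + inner ℝ h (Y ω))) ∂p := by
  set M := 1 + 2 * c / α
  set S := {ω | inner ℝ h (Y ω) < -α * ‖h‖} ∩ {ω | V ω (-(n : ℝ)) ≤ ((-M : ℝ) : EReal)}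
  have hVn : MeasurableSet {ω | V ω (-(n : ℝ)) ≤ ((-M : ℝ) : EReal)} :=
    measurableSet_le (hV.comp (measurable_id.prodMk measurable_const)) measurable_const
  have hS : MeasurableSet S :=
    (measurableSet_lt ((continuous_const.inner continuous_id).measurable.comp hY)
      measurable_const).inter hVn
  have hpS : ENNReal.ofReal (α / 2) ≤ p S := by
    simpa only [sub_half] using ofReal_sub_le_measure_inter hVn (by positivity) hqNA hneg
  have hHη : 1 ≤ ‖h‖ ^ η := Real.one_le_rpow hH hη0
  have hscale : (max x 0 + n) * ‖h‖ ^ η ≤ α * ‖h‖ := by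
    have := mul_rpow_le_self (by positivity) hH hη1 hK
    rwa [div_mul_eq_mul_div, div_le_iff₀ hα, mul_comm ‖h‖] at this
  have hSu : ∀ ω ∈ S, x + inner ℝ h (Y ω) ≤ ‖h‖ ^ η * (-n) ∧ V ω (-n) ≤ ((-M : ℝ) : EReal) :=
    fun ω hω => ⟨by
      have hωh : inner ℝ h (Y ω) < -α * ‖h‖ := hω.1
      nlinarith [le_max_left x 0, mul_nonneg (le_max_right x 0) (sub_nonneg.2 hHη)], hω.2⟩
  have hM : M * (α / 2) - c = α / 2 := by simp only [M]; field_simp; ring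
  calc ENNReal.ofReal (‖h‖ ^ (η * γ) * α / 2)
      = ENNReal.ofReal ((‖h‖ ^ η) ^ γ)
          * (ENNReal.ofReal M * ENNReal.ofReal (α / 2) - ENNReal.ofReal c) := by
        rw [← ENNReal.ofReal_mul (by positivity), ← ENNReal.ofReal_sub _ hc0, hM,
          ← ENNReal.ofReal_mul (by positivity), ← Real.rpow_mul (norm_nonneg h), mul_div_assoc]
    _ ≤ ENNReal.ofReal ((‖h‖ ^ η) ^ γ) * (ENNReal.ofReal M * p S - ∫⁻ ω, C ω ∂p) := by
        rw [hc]; gcongr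
    _ ≤ _ := ofReal_mul_sub_le_lintegral_eNeg hmono hC hCfin hgrow hS hHη hSu

end Integrals

theorem psi_coercive_bound_general {Ω : Type*} [MeasurableSpace Ω] {d : ℕ}
    (p : Measure Ω) [IsProbabilityMeasure p]
    (Y : Ω → EuclideanSpace ℝ (Fin d)) (hY : Measurable Y)
    (V : Ω → ℝ → EReal) (hVmeas : Measurable (Function.uncurry V))
    (hVmono : ∀ ω, Monotone (V ω))
    (γlo γhi η : ℝ)
    (hη0 : 0 < η) (hη1 : η < 1)
    (C : Ω → ℝ≥0∞) (hCmeas : Measurable C)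
    (cstar : ℝ) (hcstar0 : 0 ≤ cstar) (hcstar : (∫⁻ ω, C ω ∂p) = ENNReal.ofReal cstar)
    (hgrow_lo : ∀ ω, C ω < ⊤ → ∀ lam : ℝ, 1 ≤ lam → ∀ x : ℝ,
      V ω (lam * x) ≤ ((lam ^ γlo : ℝ) : EReal) * (V ω x + (C ω : EReal)))
    (hgrow_hi : ∀ ω, C ω < ⊤ → ∀ lam : ℝ, 1 ≤ lam → ∀ x : ℝ,
      V ω (lam * x) ≤ ((lam ^ γhi : ℝ) : EReal) * (V ω x + (C ω : EReal)))
    (αstar : ℝ) (hα0 : 0 < αstar)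
    (A : Set (EuclideanSpace ℝ (Fin d)))
    (hqNA : ∀ h ∈ A, h ≠ 0 →
      ENNReal.ofReal αstar ≤ p {ω | (inner ℝ h (Y ω) : ℝ) < -αstar * ‖h‖})
    (n₀ : ℕ)
    (hneg : ENNReal.ofReal (1 - αstar / 2)
      ≤ p {ω | V ω (-(n₀ : ℝ)) ≤ ((-(1 + 2 * cstar / αstar) : ℝ) : EReal)})
    (lstar : ℝ) (hlstar0 : 0 ≤ lstar)
    (hlstar : (∑ s : Fin d → Bool,
      ∫⁻ ω, ePos (V ω (1 + (inner ℝ (signVec s) (Y ω) : ℝ))) ∂p) = ENNReal.ofReal lstar) :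
    ∀ x : ℝ, ∀ h ∈ A,
      max (max 1 (max x 0)) (max ((max x 0 + n₀) / αstar)
          (((max x 0 + n₀) / αstar) ^ (1 / (1 - η)))) ≤ ‖h‖ →
      Iminus p (fun ω => V ω (x + (inner ℝ h (Y ω) : ℝ)))
        ≤ ((‖h‖ ^ γlo * (lstar + cstar) - ‖h‖ ^ (η * γhi) * αstar / 2 : ℝ) : EReal) := by
  intro x h hA hK
  obtain ⟨⟨hH, hxH, -⟩, -, hR⟩ := by simpa only [max_le_iff] using hK
  have hne : h ≠ 0 := by rintro rfl; norm_num at hH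
  have hCfin : ∀ᵐ ω ∂p, C ω < ⊤ := ae_lt_top hCmeas (hcstar ▸ ENNReal.ofReal_ne_top)
  have hpos := lintegral_ePos_le hY hVmeas hVmono hCmeas hCfin hgrow_lo hH hxH
  rw [hlstar, hcstar, ← ENNReal.ofReal_add hlstar0 hcstar0,
    ← ENNReal.ofReal_mul (by positivity)] at hpos
  exact Iminus_le_coe_sub (by positivity) hpos <|
    ofReal_le_lintegral_eNeg hY hVmeas hVmono hCmeas hCfin hgrow_hi hη0.le hη1 hα0 hcstar0 hcstar
      hH hR (hqNA h hA hne) hneg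

/-- Under the two elasticity bounds with exponents `γ̲ ≤ 1 ≤ γ̄`,
`η ∈ (0,1)` with `γ̲ < η·γ̄`, the quantitative no-arbitrage bound `α*` on `A`, the
negativity bound at `−n₀`, and `l* < ∞`, every `x ∈ ℝ` and `h ∈ A` with
`|h| ≥ K₀(x) := max(1, x⁺, (x⁺+n₀)/α*, ((x⁺+n₀)/α*)^{1/(1−η)})` satisfy
`I_{p*}(ω ↦ V(ω, x + ⟨h, Y ω⟩)) ≤ |h|^{γ̲}·(l* + c*) − |h|^{η·γ̄}·α*/2`. -/
theorem psi_coercive_bound {Ω : Type*} [MeasurableSpace Ω] {d : ℕ}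
    (p : Measure Ω) [IsProbabilityMeasure p]
    (Y : Ω → EuclideanSpace ℝ (Fin d)) (hY : Measurable Y)
    (V : Ω → ℝ → EReal) (hVmeas : Measurable (Function.uncurry V))
    (hVmono : ∀ ω, Monotone (V ω))
    (γlo γhi η : ℝ) (hγlo : 0 < γlo) (hγlo1 : γlo ≤ 1) (hγhi : 1 ≤ γhi) (hγne : γlo ≠ γhi)
    (hη0 : 0 < η) (hη1 : η < 1) (hηγ : γlo < η * γhi)
    (C : Ω → ℝ≥0∞) (hCmeas : Measurable C)
    (cstar : ℝ) (hcstar0 : 0 ≤ cstar) (hcstar : (∫⁻ ω, C ω ∂p) = ENNReal.ofReal cstar)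
    (hgrow_lo : ∀ ω, C ω < ⊤ → ∀ lam : ℝ, 1 ≤ lam → ∀ x : ℝ,
      V ω (lam * x) ≤ ((lam ^ γlo : ℝ) : EReal) * (V ω x + (C ω : EReal)))
    (hgrow_hi : ∀ ω, C ω < ⊤ → ∀ lam : ℝ, 1 ≤ lam → ∀ x : ℝ,
      V ω (lam * x) ≤ ((lam ^ γhi : ℝ) : EReal) * (V ω x + (C ω : EReal)))
    (αstar : ℝ) (hα0 : 0 < αstar) (hα1 : αstar ≤ 1)
    (A : Set (EuclideanSpace ℝ (Fin d)))
    (hqNA : ∀ h ∈ A, h ≠ 0 →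
      ENNReal.ofReal αstar ≤ p {ω | (inner ℝ h (Y ω) : ℝ) < -αstar * ‖h‖})
    (n₀ : ℕ) (hn₀ : 1 ≤ n₀)
    (hneg : ENNReal.ofReal (1 - αstar / 2)
      ≤ p {ω | V ω (-(n₀ : ℝ)) ≤ ((-(1 + 2 * cstar / αstar) : ℝ) : EReal)})
    (lstar : ℝ) (hlstar0 : 0 ≤ lstar)
    (hlstar : (∑ s : Fin d → Bool,
      ∫⁻ ω, ePos (V ω (1 + (inner ℝ (signVec s) (Y ω) : ℝ))) ∂p) = ENNReal.ofReal lstar) :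
    ∀ x : ℝ, ∀ h ∈ A,
      max (max 1 (max x 0)) (max ((max x 0 + n₀) / αstar)
          (((max x 0 + n₀) / αstar) ^ (1 / (1 - η)))) ≤ ‖h‖ →
      Iminus p (fun ω => V ω (x + (inner ℝ h (Y ω) : ℝ)))
        ≤ ((‖h‖ ^ γlo * (lstar + cstar) - ‖h‖ ^ (η * γhi) * αstar / 2 : ℝ) : EReal) :=
  psi_coercive_bound_general p Y hY V hVmeas hVmono γlo γhi η hη0 hη1 C hCmeas cstar hcstar0 hcstar
    hgrow_lo hgrow_hi αstar hα0 A hqNA n₀ hneg lstar hlstar0 hlstar
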